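/- arXiv:2204.10748 — 4 statements merged into one kernel-verified Lean document; each statement's English description precedes it below -/
import Mathlib

section
/- Let f ∈ C¹(ℝ) and suppose there exist a > 0 and A > 0 with |f(x)| + |f'(x)| ≤ A e^{−a|x|} for all x ∈ ℝ. Then (i) lim_{K→∞} ‖f − Q_K(P_K f)‖_{L²(ℝ)} = 0, and (ii) lim_{K→∞} ‖P_K f‖_{ℓ²} = ‖f‖_{L²(ℝ)}. -/
open Filter MeasureTheory
open scoped BigOperators Topology ENNReal

noncomputable section

/-- The interval `I_n^K`. -/
def Iset (xs : ℝ) (K n : ℕ) : Set ℝ :=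
  Set.Ico (((n : ℝ) - 1 / 2) / Real.sqrt K - xs * Real.sqrt K)
    (((n : ℝ) + 1 / 2) / Real.sqrt K - xs * Real.sqrt K)

/-- The function `e_n^K = K^{1/4} 1_{I_n^K}`. -/
def eFun (xs : ℝ) (K n : ℕ) (x : ℝ) : ℝ :=
  (K : ℝ) ^ ((1 : ℝ) / 4) * Set.indicator (Iset xs K n) (fun _ => (1 : ℝ)) x

/-- `Q_K : ℓ² → L²`, `Q_K u = Σ_{n ≥ 1} u(n) e_n^K`. -/
def QK (xs : ℝ) (K : ℕ) (u : ℕ → ℂ) (x : ℝ) : ℂ :=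
  ∑' n : ℕ, u (n + 1) * ((eFun xs K (n + 1) x : ℝ) : ℂ)

/-- `P_K : L² → ℓ²`, `(P_K f)(n) = ∫ f(x) e_n^K(x) dx`. -/
def PK (xs : ℝ) (K : ℕ) (f : ℝ → ℂ) (n : ℕ) : ℂ :=
  ∫ x : ℝ, f x * ((eFun xs K n x : ℝ) : ℂ)

namespace S9aux

lemma sqrtK_pos {K : ℕ} (hK : 1 ≤ K) : 0 < Real.sqrt K :=
  Real.sqrt_pos.mpr (by exact_mod_cast Nat.lt_of_lt_of_le Nat.zero_lt_one hK)

lemma mem_Iset_iff {xs : ℝ} {K n : ℕ} (hK : 1 ≤ K) {x : ℝ} :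
    x ∈ Iset xs K n ↔ ((n : ℝ) - 1 / 2 ≤ (x + xs * Real.sqrt K) * Real.sqrt K ∧
      (x + xs * Real.sqrt K) * Real.sqrt K < (n : ℝ) + 1 / 2) := by
  have hs := sqrtK_pos hK
  rw [Iset, Set.mem_Ico, sub_le_iff_le_add, div_le_iff₀ hs, lt_sub_iff_add_lt, lt_div_iff₀ hs]

lemma Iset_unique {xs : ℝ} {K n m : ℕ} (hK : 1 ≤ K) {x : ℝ}
    (h1 : x ∈ Iset xs K n) (h2 : x ∈ Iset xs K m) : n = m := by
  rw [mem_Iset_iff hK] at h1 h2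
  have hnm : (n : ℝ) < (m : ℝ) + 1 := by linarith
  have hmn : (m : ℝ) < (n : ℝ) + 1 := by linarith
  have h1' : n < m + 1 := by exact_mod_cast hnm
  have h2' : m < n + 1 := by exact_mod_cast hmn
  omega

lemma exists_mem {xs : ℝ} {K : ℕ} (hK : 1 ≤ K) {x : ℝ}
    (hx : 1 / 2 ≤ (x + xs * Real.sqrt K) * Real.sqrt K) :
    ∃ n : ℕ, x ∈ Iset xs K (n + 1) := by
  set t := (x + xs * Real.sqrt K) * Real.sqrt K with ht
  have h0 : (0 : ℝ) ≤ t + 1 / 2 := by linarith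
  have h1 : 1 ≤ Nat.floor (t + 1 / 2) := Nat.le_floor (by push_cast; linarith)
  obtain ⟨n, hn⟩ : ∃ n : ℕ, Nat.floor (t + 1 / 2) = n + 1 := ⟨Nat.floor (t + 1 / 2) - 1, by omega⟩
  refine ⟨n, ?_⟩
  rw [mem_Iset_iff hK]
  have hle : ((n : ℝ) + 1) ≤ t + 1 / 2 := by
    have := Nat.floor_le h0
    rw [hn] at this; push_cast at this; linarith
  have hlt : t + 1 / 2 < (n : ℝ) + 1 + 1 := by
    have := Nat.lt_floor_add_one (t + 1 / 2)
    rw [hn] at this; push_cast at this; linarith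
  constructor <;> push_cast <;> linarith

lemma measurableSet_Iset (xs : ℝ) (K n : ℕ) : MeasurableSet (Iset xs K n) :=
  measurableSet_Ico

lemma measurable_eFun (xs : ℝ) (K n : ℕ) : Measurable (eFun xs K n) :=
  measurable_const.mul (measurable_const.indicator (measurableSet_Iset xs K n))

lemma eFun_of_mem {xs : ℝ} {K n : ℕ} {x : ℝ} (hx : x ∈ Iset xs K n) :
    eFun xs K n x = (K : ℝ) ^ ((1 : ℝ) / 4) := by
  simp [eFun, Set.indicator_of_mem hx]

lemma eFun_of_not_mem {xs : ℝ} {K n : ℕ} {x : ℝ} (hx : x ∉ Iset xs K n) :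
    eFun xs K n x = 0 := by
  simp [eFun, Set.indicator_of_notMem hx]

lemma eFun_K0 (xs : ℝ) (n : ℕ) (x : ℝ) : eFun xs 0 n x = 0 := by
  simp [eFun, Real.zero_rpow (by norm_num : (1 : ℝ) / 4 ≠ 0)]

lemma k4_mul_k4 {K : ℕ} (hK : 1 ≤ K) :
    (K : ℝ) ^ ((1 : ℝ) / 4) * (K : ℝ) ^ ((1 : ℝ) / 4) = Real.sqrt K := by
  have hK0 : (0 : ℝ) < K := by exact_mod_cast Nat.lt_of_lt_of_le Nat.zero_lt_one hK
  rw [← Real.rpow_add hK0, Real.sqrt_eq_rpow]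
  norm_num

lemma k4_nonneg (K : ℕ) : 0 ≤ (K : ℝ) ^ ((1 : ℝ) / 4) :=
  Real.rpow_nonneg (Nat.cast_nonneg K) _

lemma volume_Iset {xs : ℝ} {K : ℕ} (hK : 1 ≤ K) (n : ℕ) :
    volume (Iset xs K n) = ENNReal.ofReal (1 / Real.sqrt K) := by
  have hs := sqrtK_pos hK
  have hs' : Real.sqrt K ≠ 0 := ne_of_gt hs
  rw [Iset, Real.volume_Ico]
  congr 1
  field_simp
  ring

lemma dist_le_of_mem {xs : ℝ} {K n : ℕ} (hK : 1 ≤ K) {x y : ℝ}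
    (hx : x ∈ Iset xs K n) (hy : y ∈ Iset xs K n) : |y - x| ≤ 1 / Real.sqrt K := by
  have hs := sqrtK_pos hK
  rw [mem_Iset_iff hK] at hx hy
  have h1 : |y - x| * Real.sqrt K < 1 := by
    have he : (y + xs * Real.sqrt K) * Real.sqrt K - (x + xs * Real.sqrt K) * Real.sqrt K
        = (y - x) * Real.sqrt K := by ring
    have habs : |(y - x) * Real.sqrt K| < 1 := by
      rw [← he, abs_lt]
      constructor <;> linarith [hx.1, hx.2, hy.1, hy.2]
    rwa [abs_mul, abs_of_pos hs] at habs
  rw [le_div_iff₀ hs]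
  exact h1.le

lemma summable_term (xs : ℝ) {K : ℕ} (u : ℕ → ℂ) (x : ℝ) :
    Summable (fun n : ℕ => u (n + 1) * ((eFun xs K (n + 1) x : ℝ) : ℂ)) := by
  rcases Nat.eq_zero_or_pos K with h0 | hK
  · subst h0
    simp only [eFun_K0]
    simpa using summable_zero
  · by_cases hc : ∃ m : ℕ, x ∈ Iset xs K (m + 1)
    · obtain ⟨m, hm⟩ := hc
      apply summable_of_ne_finset_zero (s := {m})
      intro n hn
      have hnx : x ∉ Iset xs K (n + 1) := fun hx => by
        have := Iset_unique hK hx hm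
        simp only [Finset.mem_singleton] at hn
        omega
      simp [eFun_of_not_mem hnx]
    · push_neg at hc
      have : (fun n : ℕ => u (n + 1) * ((eFun xs K (n + 1) x : ℝ) : ℂ)) = fun _ => 0 := by
        funext n; simp [eFun_of_not_mem (hc n)]
      rw [this]; exact summable_zero

lemma QK_of_mem {xs : ℝ} {K : ℕ} (hK : 1 ≤ K) (u : ℕ → ℂ) {x : ℝ} {n : ℕ}
    (hx : x ∈ Iset xs K (n + 1)) :
    QK xs K u x = u (n + 1) * (((K : ℝ) ^ ((1 : ℝ) / 4) : ℝ) : ℂ) := by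
  rw [QK, tsum_eq_single n]
  · rw [eFun_of_mem hx]
  · intro m hm
    have hmx : x ∉ Iset xs K (m + 1) := fun hx' => hm (by
      have := Iset_unique hK hx' hx; omega)
    simp [eFun_of_not_mem hmx]

lemma QK_of_not_mem {xs : ℝ} {K : ℕ} (u : ℕ → ℂ) {x : ℝ}
    (h : ∀ n : ℕ, x ∉ Iset xs K (n + 1)) : QK xs K u x = 0 := by
  rw [QK]
  have : ∀ n : ℕ, u (n + 1) * ((eFun xs K (n + 1) x : ℝ) : ℂ) = 0 := fun n => by
    simp [eFun_of_not_mem (h n)]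
  exact (tsum_congr this).trans tsum_zero

lemma QK_K0 (xs : ℝ) (u : ℕ → ℂ) (x : ℝ) : QK xs 0 u x = 0 := by
  rw [QK]
  have : ∀ n : ℕ, u (n + 1) * ((eFun xs 0 (n + 1) x : ℝ) : ℂ) = 0 := fun n => by
    simp [eFun_K0]
  exact (tsum_congr this).trans tsum_zero

lemma integrable_exp_neg_mul_abs {b : ℝ} (hb : 0 < b) :
    Integrable fun x : ℝ => Real.exp (-b * |x|) := by
  rw [← integrableOn_univ, ← Set.Iio_union_Ici (a := (0 : ℝ)), integrableOn_union,
    integrableOn_Ici_iff_integrableOn_Ioi]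
  constructor
  · rw [← (Measure.measurePreserving_neg (volume : Measure ℝ)).integrableOn_comp_preimage
        (Homeomorph.neg ℝ).measurableEmbedding]
    simp only [Function.comp_def, abs_neg, Set.neg_preimage, Set.neg_Iio, neg_zero]
    exact (exp_neg_integrableOn_Ioi 0 hb).congr_fun
      (fun x hx => by rw [abs_of_pos hx]) measurableSet_Ioi
  · exact (exp_neg_integrableOn_Ioi 0 hb).congr_fun
      (fun x hx => by rw [abs_of_pos hx]) measurableSet_Ioi

end S9aux

open S9aux

/-- For `f ∈ C¹` with exponential decay of `f` and `f'`:
(i) `Q_K P_K f → f` in `L²`; (ii) `‖P_K f‖_{ℓ²} → ‖f‖_{L²}`. -/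
theorem statement9 (xs : ℝ) (hxs : 0 < xs) (f : ℝ → ℂ) (hf : ContDiff ℝ 1 f)
    (a A : ℝ) (ha : 0 < a) (hA : 0 < A)
    (hbound : ∀ x : ℝ, ‖f x‖ + ‖deriv f x‖ ≤ A * Real.exp (-a * |x|)) :
    Tendsto (fun K : ℕ => eLpNorm (fun x => f x - QK xs K (PK xs K f) x) 2 volume)
      atTop (nhds 0) ∧
    Tendsto (fun K : ℕ => Real.sqrt (∑' n : ℕ, ‖PK xs K f (n + 1)‖ ^ 2))
      atTop (nhds ((eLpNorm f 2 volume).toReal)) := by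

  classical
  have hfc : Continuous f := hf.continuous
  have hfm : Measurable f := hfc.measurable
  have hfAE : AEStronglyMeasurable f volume := hfc.aestronglyMeasurable
  have hexp_le_one : ∀ x : ℝ, Real.exp (-a * |x|) ≤ 1 := fun x =>
    Real.exp_le_one_iff.mpr (by nlinarith [abs_nonneg x])
  have hf_le : ∀ x, ‖f x‖ ≤ A * Real.exp (-a * |x|) := fun x =>
    le_trans (le_add_of_nonneg_right (norm_nonneg _)) (hbound x)
  have hd_le : ∀ x, ‖deriv f x‖ ≤ A := fun x => by
    have h1 := hbound x
    have h2 : A * Real.exp (-a * |x|) ≤ A * 1 := mul_le_mul_of_nonneg_left (hexp_le_one x) hA.le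
    nlinarith [norm_nonneg (f x)]
  have hLip : ∀ x y : ℝ, ‖f y - f x‖ ≤ A * |y - x| := by
    intro x y
    have hl : LipschitzWith A.toNNReal f :=
      lipschitzWith_of_nnnorm_deriv_le (hf.differentiable one_ne_zero) (fun z => by
        rw [← NNReal.coe_le_coe, coe_nnnorm, Real.coe_toNNReal _ hA.le]; exact hd_le z)
    have h2 := hl.dist_le_mul y x
    rwa [dist_eq_norm, Real.dist_eq, Real.coe_toNNReal _ hA.le] at h2
  -- MemLp of exponential bounds
  have hexp2 : ∀ C b : ℝ, 0 < b → MemLp (fun x : ℝ => C * Real.exp (-b * |x|)) 2 volume := by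
    intro C b hb
    have hmeas : AEStronglyMeasurable (fun x : ℝ => C * Real.exp (-b * |x|)) volume :=
      (continuous_const.mul (Real.continuous_exp.comp
        (continuous_const.mul continuous_abs))).aestronglyMeasurable
    rw [memLp_two_iff_integrable_sq hmeas]
    have heq : (fun x : ℝ => (C * Real.exp (-b * |x|)) ^ 2)
        = fun x : ℝ => C ^ 2 * Real.exp (-(2 * b) * |x|) := by
      funext x
      rw [mul_pow, pow_two (Real.exp _), ← Real.exp_add]
      congr 1
      ring
    rw [heq]
    exact (integrable_exp_neg_mul_abs (by linarith)).const_mul _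
  have hfL2 : MemLp f 2 volume :=
    MemLp.of_le (hexp2 A a ha) hfAE (Filter.Eventually.of_forall fun x => by
      rw [Real.norm_eq_abs, abs_of_nonneg (by positivity)]; exact hf_le x)
  set g : ℕ → ℝ → ℂ := fun K x => QK xs K (PK xs K f) x with hgdef
  -- integral representation of PK
  have hInt : ∀ K n : ℕ, IntegrableOn f (Iset xs K n) volume := fun K n =>
    (hfc.integrableOn_Icc).mono_set Set.Ico_subset_Icc_self
  have hPK : ∀ K n : ℕ, PK xs K f n
      = (((K : ℝ) ^ ((1 : ℝ) / 4) : ℝ) : ℂ) * ∫ x in Iset xs K n, f x := by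
    intro K n
    rw [PK]
    have h1 : (fun x => f x * ((eFun xs K n x : ℝ) : ℂ))
        = Set.indicator (Iset xs K n)
            (fun y => (((K : ℝ) ^ ((1 : ℝ) / 4) : ℝ) : ℂ) * f y) := by
      funext x
      by_cases hx : x ∈ Iset xs K n
      · rw [eFun_of_mem hx, Set.indicator_of_mem hx]; ring
      · rw [eFun_of_not_mem hx, Set.indicator_of_notMem hx]; simp
    rw [h1, integral_indicator (measurableSet_Iset xs K n), integral_const_mul]
  have hvol : ∀ {K : ℕ}, 1 ≤ K → ∀ n : ℕ,
      (volume (Iset xs K n)).toReal = 1 / Real.sqrt K := by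
    intro K hK n
    rw [volume_Iset hK, ENNReal.toReal_ofReal (by positivity)]
  have hvolfin : ∀ {K : ℕ}, 1 ≤ K → ∀ n : ℕ, volume (Iset xs K n) < ⊤ := by
    intro K hK n
    rw [volume_Iset hK]; exact ENNReal.ofReal_lt_top
  have hg_mem : ∀ {K : ℕ}, 1 ≤ K → ∀ {x : ℝ} {n : ℕ}, x ∈ Iset xs K (n + 1) →
      g K x = ((Real.sqrt K : ℝ) : ℂ) * ∫ y in Iset xs K (n + 1), f y := by
    intro K hK x n hx
    show QK xs K (PK xs K f) x = _
    rw [QK_of_mem hK _ hx, hPK, ← k4_mul_k4 hK]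
    push_cast
    ring
  -- uniform bound for g
  have hg_bd : ∀ (K : ℕ) (x : ℝ), ‖g K x‖ ≤ A * Real.exp a * Real.exp (-a * |x|) := by
    intro K x
    have hpos : 0 ≤ A * Real.exp a * Real.exp (-a * |x|) := by positivity
    rcases Nat.eq_zero_or_pos K with h0 | hK
    · subst h0
      show ‖QK xs 0 (PK xs 0 f) x‖ ≤ _
      rw [QK_K0]; simpa using hpos
    · by_cases hc : ∃ n : ℕ, x ∈ Iset xs K (n + 1)
      · obtain ⟨n, hn⟩ := hc
        rw [hg_mem hK hn]
        have hs := sqrtK_pos hK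
        have h1K : 1 / Real.sqrt K ≤ 1 := by
          rw [div_le_one hs]
          calc (1 : ℝ) = Real.sqrt 1 := Real.sqrt_one.symm
            _ ≤ Real.sqrt K := Real.sqrt_le_sqrt (by exact_mod_cast hK)
        have hCy : ∀ y ∈ Iset xs K (n + 1), ‖f y‖ ≤ A * Real.exp a * Real.exp (-a * |x|) := by
          intro y hy
          have hd := dist_le_of_mem hK hn hy
          have h2 : |x - y| ≤ 1 := by
            rw [abs_sub_comm]; exact le_trans hd h1K
          have habs : |x| - 1 ≤ |y| := by
            have h3 : |x| - |y| ≤ |x - y| := abs_sub_abs_le_abs_sub x y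
            linarith
          calc ‖f y‖ ≤ A * Real.exp (-a * |y|) := hf_le y
            _ ≤ A * Real.exp (a - a * |x|) := by
                apply mul_le_mul_of_nonneg_left _ hA.le
                apply Real.exp_le_exp.mpr; nlinarith
            _ = A * Real.exp a * Real.exp (-a * |x|) := by
                rw [mul_assoc, ← Real.exp_add]; ring_nf
        have hnorm := norm_setIntegral_le_of_norm_le_const (hvolfin hK (n + 1)) hCy
        rw [norm_mul, Complex.norm_real, Real.norm_eq_abs, abs_of_pos hs]
        calc Real.sqrt K * ‖∫ y in Iset xs K (n + 1), f y‖
            ≤ Real.sqrt K * ((A * Real.exp a * Real.exp (-a * |x|))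
              * (volume (Iset xs K (n + 1))).toReal) :=
              mul_le_mul_of_nonneg_left hnorm hs.le
          _ = A * Real.exp a * Real.exp (-a * |x|) := by
              rw [hvol hK]
              field_simp
      · push_neg at hc
        show ‖QK xs K (PK xs K f) x‖ ≤ _
        rw [QK_of_not_mem _ hc]; simpa using hpos
  -- measurability of g
  have hgm : ∀ K : ℕ, Measurable (g K) := by
    intro K
    have hterm : ∀ n : ℕ,
        Measurable fun x : ℝ => PK xs K f (n + 1) * ((eFun xs K (n + 1) x : ℝ) : ℂ) :=
      fun n => measurable_const.mul
        (Complex.continuous_ofReal.measurable.comp (measurable_eFun xs K (n + 1)))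
    have hpart : ∀ m : ℕ, Measurable fun x : ℝ =>
        ∑ n ∈ Finset.range m, PK xs K f (n + 1) * ((eFun xs K (n + 1) x : ℝ) : ℂ) :=
      fun m => Finset.measurable_sum _ (fun n _ => hterm n)
    apply measurable_of_tendsto_metrizable hpart
    rw [tendsto_pi_nhds]
    intro x
    exact ((summable_term xs (PK xs K f) x).hasSum).tendsto_sum_nat
  have hgAE : ∀ K : ℕ, AEStronglyMeasurable (g K) volume :=
    fun K => (hgm K).aestronglyMeasurable
  have hgL2 : ∀ K : ℕ, MemLp (g K) 2 volume := fun K =>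
    MemLp.of_le (hexp2 (A * Real.exp a) a ha) (hgAE K)
      (Filter.Eventually.of_forall fun x => by
        rw [Real.norm_eq_abs, abs_of_nonneg (by positivity)]
        exact hg_bd K x)
  -- sqrt K → ∞
  have hsqK : Tendsto (fun K : ℕ => Real.sqrt K) atTop atTop := by
    refine tendsto_atTop_atTop.mpr fun b => ⟨⌈b ^ 2⌉₊, fun K hK => ?_⟩
    rcases le_or_gt b 0 with hb | hb
    · exact hb.trans (Real.sqrt_nonneg _)
    · have h1 : b ^ 2 ≤ (K : ℝ) := le_trans (Nat.le_ceil _) (by exact_mod_cast hK)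
      have h2 := Real.sqrt_le_sqrt h1
      rwa [Real.sqrt_sq hb.le] at h2
  -- pointwise convergence
  have hpt : ∀ x : ℝ, Tendsto (fun K : ℕ => g K x) atTop (𝓝 (f x)) := by
    intro x
    rw [tendsto_iff_norm_sub_tendsto_zero]
    have hev : ∀ᶠ K : ℕ in atTop, ‖g K x - f x‖ ≤ A * (1 / Real.sqrt K) := by
      have hinf : Tendsto (fun K : ℕ => (x + xs * Real.sqrt K) * Real.sqrt K) atTop atTop := by
        have h1 : Tendsto (fun K : ℕ => x + xs * Real.sqrt K) atTop atTop :=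
          tendsto_atTop_add_const_left _ x
            ((tendsto_const_mul_atTop_of_pos hxs).mpr hsqK)
        exact h1.atTop_mul_atTop₀ hsqK
      filter_upwards [eventually_ge_atTop 1, hinf.eventually_ge_atTop (1 / 2)] with K hK hcov
      obtain ⟨n, hn⟩ := exists_mem hK hcov
      have hs := sqrtK_pos hK
      have hkey : ((Real.sqrt K : ℝ) : ℂ) * ((1 / Real.sqrt K : ℝ) : ℂ) = 1 := by
        rw [← Complex.ofReal_mul, mul_one_div_cancel hs.ne', Complex.ofReal_one]
      have hconst : (∫ _ in Iset xs K (n + 1), f x)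
          = ((1 / Real.sqrt K : ℝ) : ℂ) * f x := by
        rw [setIntegral_const, measureReal_def, hvol hK, Complex.real_smul]
      have hdiff : g K x - f x
          = ((Real.sqrt K : ℝ) : ℂ) * ∫ y in Iset xs K (n + 1), (f y - f x) := by
        rw [integral_sub (hInt K (n + 1))
          (integrableOn_const (hvolfin hK (n + 1)).ne), hconst,
          mul_sub, ← mul_assoc, hkey, one_mul, hg_mem hK hn]
      rw [hdiff, norm_mul, Complex.norm_real, Real.norm_eq_abs, abs_of_pos hs]
      have hb2 : ‖∫ y in Iset xs K (n + 1), (f y - f x)‖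
          ≤ (A * (1 / Real.sqrt K)) * (volume (Iset xs K (n + 1))).toReal := by
        apply norm_setIntegral_le_of_norm_le_const (hvolfin hK (n + 1))
        · intro y hy
          calc ‖f y - f x‖ ≤ A * |y - x| := hLip x y
            _ ≤ A * (1 / Real.sqrt K) :=
                mul_le_mul_of_nonneg_left (dist_le_of_mem hK hn hy) hA.le
      calc Real.sqrt K * ‖∫ y in Iset xs K (n + 1), (f y - f x)‖
          ≤ Real.sqrt K * ((A * (1 / Real.sqrt K)) * (volume (Iset xs K (n + 1))).toReal) :=
            mul_le_mul_of_nonneg_left hb2 hs.le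
        _ = A * (1 / Real.sqrt K) := by
            rw [hvol hK]
            field_simp
    have hlim : Tendsto (fun K : ℕ => A * (1 / Real.sqrt K)) atTop (𝓝 0) := by
      have h1 : Tendsto (fun K : ℕ => (Real.sqrt K)⁻¹) atTop (𝓝 0) :=
        tendsto_inv_atTop_zero.comp hsqK
      have h2 := h1.const_mul A
      simpa [one_div] using h2
    exact squeeze_zero' (Filter.Eventually.of_forall fun K => norm_nonneg _) hev hlim
  -- dominated convergence
  set B : ℝ → ℝ := fun x => A * (1 + Real.exp a) * Real.exp (-a * |x|) with hBdef
  have hBL2 : MemLp B 2 volume := hexp2 _ a ha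
  have hFB : ∀ (K : ℕ) (x : ℝ), ‖f x - g K x‖ ≤ B x := by
    intro K x
    calc ‖f x - g K x‖ ≤ ‖f x‖ + ‖g K x‖ := norm_sub_le _ _
      _ ≤ A * Real.exp (-a * |x|) + A * Real.exp a * Real.exp (-a * |x|) :=
          add_le_add (hf_le x) (hg_bd K x)
      _ = B x := by rw [hBdef]; ring
  have hTL : Tendsto (fun K : ℕ => ∫⁻ x, (‖f x - g K x‖₊ : ℝ≥0∞) ^ (2 : ℝ)) atTop (𝓝 0) := by
    have hmeas' : ∀ K : ℕ, Measurable fun x => (‖f x - g K x‖₊ : ℝ≥0∞) ^ (2 : ℝ) := fun K =>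
      (ENNReal.continuous_rpow_const.measurable).comp (hfm.sub (hgm K)).enorm
    have hres := tendsto_lintegral_of_dominated_convergence
      (μ := (volume : Measure ℝ))
      (F := fun (K : ℕ) x => (‖f x - g K x‖₊ : ℝ≥0∞) ^ (2 : ℝ))
      (f := fun _ => (0 : ℝ≥0∞))
      (fun x => (‖B x‖₊ : ℝ≥0∞) ^ (2 : ℝ)) hmeas' ?_ ?_ ?_
    · simpa using hres
    · intro K
      refine Filter.Eventually.of_forall fun x => ?_
      apply ENNReal.rpow_le_rpow _ (by norm_num : (0 : ℝ) ≤ 2)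
      rw [ENNReal.coe_le_coe, ← NNReal.coe_le_coe, coe_nnnorm, coe_nnnorm]
      exact le_trans (hFB K x) (le_abs_self _)
    · have h := lintegral_rpow_enorm_lt_top_of_eLpNorm_lt_top (p := 2)
        two_ne_zero ENNReal.ofNat_ne_top hBL2.2
      simp only [ENNReal.toReal_ofNat] at h
      exact h.ne
    · refine Filter.Eventually.of_forall fun x => ?_
      have h0 : Tendsto (fun K : ℕ => f x - g K x) atTop (𝓝 0) := by
        have h1 := Filter.Tendsto.const_sub (f x) (hpt x)
        simpa using h1
      have h1 : Tendsto (fun K : ℕ => (‖f x - g K x‖₊ : ℝ≥0∞)) atTop (𝓝 0) := by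
        have h2 := ENNReal.tendsto_coe.mpr (by simpa using h0.nnnorm)
        simpa using h2
      have h2 := (ENNReal.continuous_rpow_const (y := (2 : ℝ))).tendsto 0 |>.comp h1
      simpa [Function.comp_def, ENNReal.zero_rpow_of_pos (by norm_num : (0 : ℝ) < 2)] using h2
  have hT1 : Tendsto (fun K : ℕ => eLpNorm (fun x => f x - g K x) 2 volume) atTop (𝓝 0) := by
    have heq : ∀ K : ℕ, eLpNorm (fun x => f x - g K x) 2 volume
        = (∫⁻ x, (‖f x - g K x‖₊ : ℝ≥0∞) ^ (2 : ℝ)) ^ ((1 : ℝ) / 2) := by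
      intro K
      rw [eLpNorm_eq_lintegral_rpow_enorm_toReal two_ne_zero ENNReal.ofNat_ne_top]
      simp [ENNReal.toReal_ofNat]
      rfl
    simp only [heq]
    have h2 := (ENNReal.continuous_rpow_const (y := (1 : ℝ) / 2)).tendsto 0 |>.comp hTL
    simpa [Function.comp_def, ENNReal.zero_rpow_of_pos (by norm_num : (0 : ℝ) < 1 / 2)] using h2
  -- Part (ii): Parseval-type identity
  have hSK : ∀ {K : ℕ}, 1 ≤ K →
      (∫⁻ x, (‖g K x‖₊ : ℝ≥0∞) ^ (2 : ℝ))
        = ∑' n : ℕ, (‖PK xs K f (n + 1)‖₊ : ℝ≥0∞) ^ (2 : ℝ) := by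
    intro K hK
    have hs := sqrtK_pos hK
    have hptw : ∀ x : ℝ, (‖g K x‖₊ : ℝ≥0∞) ^ (2 : ℝ)
        = ∑' n : ℕ, (Iset xs K (n + 1)).indicator
            (fun _ => (‖PK xs K f (n + 1)‖₊ : ℝ≥0∞) ^ (2 : ℝ)
              * ENNReal.ofReal (Real.sqrt K)) x := by
      intro x
      by_cases hc : ∃ m : ℕ, x ∈ Iset xs K (m + 1)
      · obtain ⟨m, hm⟩ := hc
        rw [tsum_eq_single m (fun n hn => Set.indicator_of_notMem
            (fun hx => hn (by have := Iset_unique hK hx hm; omega)) _),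
          Set.indicator_of_mem hm]
        have hgx : g K x = PK xs K f (m + 1) * (((K : ℝ) ^ ((1 : ℝ) / 4) : ℝ) : ℂ) :=
          QK_of_mem hK _ hm
        have hk4pos : (0 : ℝ) < (K : ℝ) ^ ((1 : ℝ) / 4) :=
          Real.rpow_pos_of_pos (by exact_mod_cast hK) _
        have hkey : ((‖(((K : ℝ) ^ ((1 : ℝ) / 4) : ℝ) : ℂ)‖₊ : ℝ≥0∞)) ^ (2 : ℝ)
            = ENNReal.ofReal (Real.sqrt K) := by
          rw [← enorm_eq_nnnorm, ← ofReal_norm, Complex.norm_real, Real.norm_eq_abs,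
            abs_of_pos hk4pos, ENNReal.ofReal_rpow_of_pos hk4pos]
          congr 1
          rw [show (2 : ℝ) = ((2 : ℕ) : ℝ) by norm_num, Real.rpow_natCast, pow_two,
            k4_mul_k4 hK]
        rw [hgx, nnnorm_mul, ENNReal.coe_mul,
          ENNReal.mul_rpow_of_nonneg _ _ (by norm_num : (0 : ℝ) ≤ 2), hkey]
      · push_neg at hc
        have hzero : g K x = 0 := QK_of_not_mem _ hc
        have hzr : ∀ n : ℕ, (Iset xs K (n + 1)).indicator
            (fun _ => (‖PK xs K f (n + 1)‖₊ : ℝ≥0∞) ^ (2 : ℝ)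
              * ENNReal.ofReal (Real.sqrt K)) x = 0 :=
          fun n => Set.indicator_of_notMem (hc n) _
        rw [hzero, (tsum_congr hzr).trans tsum_zero]
        simp [ENNReal.zero_rpow_of_pos (by norm_num : (0 : ℝ) < 2)]
    calc (∫⁻ x, (‖g K x‖₊ : ℝ≥0∞) ^ (2 : ℝ))
        = ∫⁻ x, ∑' n : ℕ, (Iset xs K (n + 1)).indicator
            (fun _ => (‖PK xs K f (n + 1)‖₊ : ℝ≥0∞) ^ (2 : ℝ)
              * ENNReal.ofReal (Real.sqrt K)) x := lintegral_congr hptw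
      _ = ∑' n : ℕ, ∫⁻ x, (Iset xs K (n + 1)).indicator
            (fun _ => (‖PK xs K f (n + 1)‖₊ : ℝ≥0∞) ^ (2 : ℝ)
              * ENNReal.ofReal (Real.sqrt K)) x :=
          lintegral_tsum (fun n =>
            (measurable_const.indicator (measurableSet_Iset xs K (n + 1))).aemeasurable)
      _ = ∑' n : ℕ, (‖PK xs K f (n + 1)‖₊ : ℝ≥0∞) ^ (2 : ℝ) := by
          refine tsum_congr fun n => ?_
          rw [lintegral_indicator (measurableSet_Iset xs K (n + 1)), setLIntegral_const,
            volume_Iset hK, mul_assoc, ← ENNReal.ofReal_mul (Real.sqrt_nonneg _),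
            mul_one_div_cancel hs.ne', ENNReal.ofReal_one, mul_one]
  have hfinK : ∀ K : ℕ, (∫⁻ x, (‖g K x‖₊ : ℝ≥0∞) ^ (2 : ℝ)) ≠ ⊤ := by
    intro K
    have h := lintegral_rpow_enorm_lt_top_of_eLpNorm_lt_top (p := 2)
      two_ne_zero ENNReal.ofNat_ne_top (hgL2 K).2
    simp only [ENNReal.toReal_ofNat] at h
    exact h.ne
  have hsqeq : ∀ {K : ℕ}, 1 ≤ K → Real.sqrt (∑' n : ℕ, ‖PK xs K f (n + 1)‖ ^ 2)
      = (eLpNorm (g K) 2 volume).toReal := by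
    intro K hK
    have hterm_ne : ∀ n : ℕ, (‖PK xs K f (n + 1)‖₊ : ℝ≥0∞) ^ (2 : ℝ) ≠ ⊤ := fun n =>
      ENNReal.rpow_ne_top_of_nonneg (by norm_num) ENNReal.coe_ne_top
    have h1 : (∑' n : ℕ, ‖PK xs K f (n + 1)‖ ^ 2)
        = (∑' n : ℕ, (‖PK xs K f (n + 1)‖₊ : ℝ≥0∞) ^ (2 : ℝ)).toReal := by
      rw [ENNReal.tsum_toReal_eq hterm_ne]
      refine tsum_congr fun n => ?_
      rw [← ENNReal.toReal_rpow, ENNReal.coe_toReal, coe_nnnorm,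
        show (2 : ℝ) = ((2 : ℕ) : ℝ) by norm_num, Real.rpow_natCast]
    rw [h1, ← hSK hK, eLpNorm_eq_lintegral_rpow_enorm_toReal two_ne_zero ENNReal.ofNat_ne_top]
    simp only [ENNReal.toReal_ofNat]
    rw [← ENNReal.toReal_rpow, Real.sqrt_eq_rpow]
    rfl
  -- conclude
  have hD0 : Tendsto (fun K : ℕ => (eLpNorm (fun x => f x - g K x) 2 volume).toReal)
      atTop (𝓝 0) := by
    have h := (ENNReal.tendsto_toReal (by simp : (0 : ℝ≥0∞) ≠ ⊤)).comp hT1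
    simpa [Function.comp_def] using h
  have hDfin : ∀ K : ℕ, eLpNorm (fun x => f x - g K x) 2 volume ≠ ⊤ := fun K =>
    (hfL2.sub (hgL2 K)).2.ne
  have hfFin : eLpNorm f 2 volume ≠ ⊤ := hfL2.2.ne
  have hgFin : ∀ K : ℕ, eLpNorm (g K) 2 volume ≠ ⊤ := fun K => (hgL2 K).2.ne
  have hFKAE : ∀ K : ℕ, AEStronglyMeasurable (fun x => f x - g K x) volume :=
    fun K => hfAE.sub (hgAE K)
  have hineq : ∀ K : ℕ, |(eLpNorm (g K) 2 volume).toReal - (eLpNorm f 2 volume).toReal|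
      ≤ (eLpNorm (fun x => f x - g K x) 2 volume).toReal := by
    intro K
    have h1 : eLpNorm (g K) 2 volume
        ≤ eLpNorm f 2 volume + eLpNorm (fun x => f x - g K x) 2 volume := by
      have h := eLpNorm_sub_le (p := 2) hfAE (hFKAE K) one_le_two
      have heq : (f - fun x => f x - g K x) = g K := by
        funext x; simp [Pi.sub_apply]
      rwa [heq] at h
    have h2 : eLpNorm f 2 volume
        ≤ eLpNorm (g K) 2 volume + eLpNorm (fun x => f x - g K x) 2 volume := by
      have h := eLpNorm_add_le (p := 2) (hgAE K) (hFKAE K) one_le_two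
      have heq : (g K + fun x => f x - g K x) = f := by
        funext x; simp [Pi.add_apply]
      rwa [heq] at h
    have h1' : (eLpNorm (g K) 2 volume).toReal
        ≤ (eLpNorm f 2 volume).toReal
          + (eLpNorm (fun x => f x - g K x) 2 volume).toReal := by
      rw [← ENNReal.toReal_add hfFin (hDfin K)]
      exact ENNReal.toReal_mono (ENNReal.add_ne_top.mpr ⟨hfFin, hDfin K⟩) h1
    have h2' : (eLpNorm f 2 volume).toReal
        ≤ (eLpNorm (g K) 2 volume).toReal
          + (eLpNorm (fun x => f x - g K x) 2 volume).toReal := by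
      rw [← ENNReal.toReal_add (hgFin K) (hDfin K)]
      exact ENNReal.toReal_mono (ENNReal.add_ne_top.mpr ⟨hgFin K, hDfin K⟩) h2
    rw [abs_sub_le_iff]
    constructor <;> linarith
  have hT2 : Tendsto (fun K : ℕ => (eLpNorm (g K) 2 volume).toReal) atTop
      (𝓝 ((eLpNorm f 2 volume).toReal)) := by
    rw [tendsto_iff_dist_tendsto_zero]
    apply squeeze_zero (fun K => dist_nonneg) (fun K => ?_) hD0
    rw [Real.dist_eq]; exact hineq K
  refine ⟨hT1, ?_⟩
  apply hT2.congr'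
  filter_upwards [eventually_ge_atTop 1] with K hK
  exact (hsqeq hK).symm
end
end

section
/- There exists ξ > 0 such that for every positive integer K and every n ≥ 1, V_n(K) ≥ −ξ. -/
open Filter MeasureTheory
open scoped BigOperators Topology ENNReal Classical

noncomputable section

/-- The standing assumptions on the birth and death rate functions `b` and `d`. -/
structure BD where
  b : ℝ → ℝ
  d : ℝ → ℝ
  xs : ℝ
  xs_pos : 0 < xs
  b_zero : b 0 = 0
  d_zero : d 0 = 0
  b_nonneg : ∀ x : ℝ, 0 ≤ x → 0 ≤ b x
  d_nonneg : ∀ x : ℝ, 0 ≤ x → 0 ≤ d x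
  bq_pos : ∀ x : ℝ, 0 < x → 0 < b x / x
  dq_pos : ∀ x : ℝ, 0 < x → 0 < d x / x
  bq_smooth : ContDiffOn ℝ 2 (fun x => b x / x) (Set.Ioi 0)
  dq_smooth : ContDiffOn ℝ 2 (fun x => d x / x) (Set.Ioi 0)
  bq_mono : StrictMonoOn (fun x => b x / x) (Set.Ioi 0)
  dq_mono : StrictMonoOn (fun x => d x / x) (Set.Ioi 0)
  ratio_tendsto : Tendsto (fun x => b x / d x) atTop (nhds 0)
  b_diff : ∀ x : ℝ, 0 ≤ x → DifferentiableAt ℝ b x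
  d_diff : ∀ x : ℝ, 0 ≤ x → DifferentiableAt ℝ d x
  deriv_d0_pos : 0 < deriv d 0
  deriv_b0_gt : deriv d 0 < deriv b 0
  fix : b xs = d xs
  fix_unique : ∀ x : ℝ, 0 < x → b x = d x → x = xs
  stab : deriv b xs < deriv d xs
  int_inv_d : MeasureTheory.IntegrableOn (fun x => 1 / d x) (Set.Ici (xs / 2))
  sup_dlog : ∃ M : ℝ, ∀ x : ℝ, 0 < x → deriv d x / d x - 1 / x ≤ M
  logratio_mono : StrictMonoOn (fun x => Real.log (d x / b x)) (Set.Ioi 0)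
  H_smooth : ContDiffOn ℝ 3 (fun x => ∫ s in xs..x, Real.log (d s / b s)) (Set.Ioi 0)
  H3_bound : ∃ M : ℝ, ∀ x : ℝ, 0 < x →
    (1 + x ^ 2) * |iteratedDeriv 3 (fun y => ∫ s in xs..y, Real.log (d s / b s)) x| ≤ M
  logb_small : Tendsto (fun x => Real.log (b x) / x) atTop (nhds 0)
  logd_small : Tendsto (fun x => Real.log (d x) / x) atTop (nhds 0)

/-- Birth rates `λ_n^K = K b(n/K)`. -/
def BD.lam (S : BD) (K n : ℕ) : ℝ := K * S.b (n / K)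

/-- Death rates `μ_n^K = K d(n/K)`. -/
def BD.mu (S : BD) (K n : ℕ) : ℝ := K * S.d (n / K)

/-- The potential `V_n(K)`. -/
def BD.Vpot (S : BD) (K n : ℕ) : ℝ :=
  S.lam K n + S.mu K n - Real.sqrt (S.lam K n * S.mu K (n + 1))
    - (if 1 < n then Real.sqrt (S.lam K (n - 1) * S.mu K n) else 0)


/-- Auxiliary: one-sided mean value bound. -/
lemma incr_of_deriv_le (f : ℝ → ℝ) (a b B : ℝ) (hab : a ≤ b)
    (hdiff : ∀ s ∈ Set.Icc a b, DifferentiableAt ℝ f s)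
    (hB : ∀ s ∈ Set.Icc a b, deriv f s ≤ B) :
    f b - f a ≤ B * (b - a) := by
  have hg : ∀ s ∈ Set.Icc a b, HasDerivAt (fun s => B * s - f s) (B - deriv f s) s := by
    intro s hs
    have h := ((hasDerivAt_id s).const_mul B).sub (hdiff s hs).hasDerivAt
    simp only [mul_one] at h
    exact h
  have hmono : MonotoneOn (fun s => B * s - f s) (Set.Icc a b) := by
    apply monotoneOn_of_deriv_nonneg (convex_Icc a b)
    · exact fun s hs => ((hg s hs).continuousAt).continuousWithinAt
    · intro s hs
      rw [interior_Icc] at hs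
      exact ((hg s (Set.Ioo_subset_Icc_self hs)).differentiableAt).differentiableWithinAt
    · intro s hs
      rw [interior_Icc] at hs
      rw [(hg s (Set.Ioo_subset_Icc_self hs)).deriv]
      have := hB s (Set.Ioo_subset_Icc_self hs)
      linarith
  have h := hmono (Set.left_mem_Icc.2 hab) (Set.right_mem_Icc.2 hab) hab
  simp only at h
  nlinarith

lemma BD.d_pos (S : BD) {x : ℝ} (hx : 0 < x) : 0 < S.d x := by
  have h := S.dq_pos x hx
  have h2 : 0 < S.d x / x * x := mul_pos h hx
  rwa [div_mul_cancel₀ _ hx.ne'] at h2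

lemma BD.b_pos (S : BD) {x : ℝ} (hx : 0 < x) : 0 < S.b x := by
  have h := S.bq_pos x hx
  have h2 : 0 < S.b x / x * x := mul_pos h hx
  rwa [div_mul_cancel₀ _ hx.ne'] at h2

lemma BD.d_mono (S : BD) {u v : ℝ} (hu : 0 ≤ u) (huv : u ≤ v) : S.d u ≤ S.d v := by
  rcases eq_or_lt_of_le hu with h0 | h0
  · rw [← h0, S.d_zero]
    exact S.d_nonneg v (h0 ▸ huv)
  · have hq : S.d u / u ≤ S.d v / v :=
      S.dq_mono.monotoneOn h0 (lt_of_lt_of_le h0 huv) huv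
    have hv : 0 < v := lt_of_lt_of_le h0 huv
    rw [div_le_div_iff₀ h0 hv] at hq
    nlinarith [S.d_nonneg u hu]

lemma BD.b_mono (S : BD) {u v : ℝ} (hu : 0 ≤ u) (huv : u ≤ v) : S.b u ≤ S.b v := by
  rcases eq_or_lt_of_le hu with h0 | h0
  · rw [← h0, S.b_zero]
    exact S.b_nonneg v (h0 ▸ huv)
  · have hq : S.b u / u ≤ S.b v / v :=
      S.bq_mono.monotoneOn h0 (lt_of_lt_of_le h0 huv) huv
    have hv : 0 < v := lt_of_lt_of_le h0 huv
    rw [div_le_div_iff₀ h0 hv] at hq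
    nlinarith [S.b_nonneg u hu]

lemma BD.d_lb (S : BD) {x : ℝ} (hx : 0 < x) : deriv S.d 0 * x ≤ S.d x := by
  have hd := (S.d_diff 0 le_rfl).hasDerivAt
  rw [hasDerivAt_iff_tendsto_slope] at hd
  have hd' : Tendsto (slope S.d 0) (nhdsWithin 0 (Set.Ioi 0)) (nhds (deriv S.d 0)) :=
    hd.mono_left (nhdsWithin_mono _ (fun y hy => ne_of_gt hy))
  have hev : ∀ᶠ y in nhdsWithin 0 (Set.Ioi 0), slope S.d 0 y ≤ S.d x / x := by
    filter_upwards [Ioo_mem_nhdsGT_of_mem (Set.mem_Ico.2 ⟨le_refl 0, hx⟩)] with y hy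
    have hy0 : 0 < y := hy.1
    have : S.d y / y ≤ S.d x / x := S.dq_mono.monotoneOn hy0 hx hy.2.le
    simpa [slope, S.d_zero, div_eq_inv_mul] using this
  have hle : deriv S.d 0 ≤ S.d x / x :=
    le_of_tendsto hd' hev
  rw [le_div_iff₀ hx] at hle
  linarith

set_option maxHeartbeats 2000000 in
/-- Uniform lower bound on the potential: `V_n(K) ≥ -ξ` for some `ξ > 0`. -/
theorem statement13 (S : BD) :
    ∃ ξ : ℝ, 0 < ξ ∧ ∀ K : ℕ, 1 ≤ K → ∀ n : ℕ, 1 ≤ n → -ξ ≤ S.Vpot K n := by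
  classical
  obtain ⟨M0, hM0⟩ := S.sup_dlog
  set M : ℝ := max M0 0 with hMdef
  have hM : 0 ≤ M := le_max_right _ _
  have hderiv_le : ∀ y : ℝ, 0 < y → deriv S.d y ≤ (M + 1 / y) * S.d y := by
    intro y hy
    have h1 := hM0 y hy
    have hdy := S.d_pos hy
    have h2 : deriv S.d y / S.d y ≤ M + 1 / y := by
      have : M0 ≤ M := le_max_left _ _
      linarith
    calc deriv S.d y = deriv S.d y / S.d y * S.d y := by field_simp
      _ ≤ (M + 1 / y) * S.d y := mul_le_mul_of_nonneg_right h2 hdy.le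
  set c : ℝ := Real.exp (M + 1) * (M + 1) with hcdef
  have hc : 0 < c := mul_pos (Real.exp_pos _) (by linarith)
  set ε : ℝ := ((2 + c)⁻¹) ^ 2 with hεdef
  have h2c : 0 < 2 + c := by linarith
  have hsqrtε : Real.sqrt ε = (2 + c)⁻¹ := Real.sqrt_sq (by positivity)
  have hε : 0 < ε := by positivity
  have htt := S.ratio_tendsto
  rw [Metric.tendsto_atTop] at htt
  obtain ⟨X₀, hX₀⟩ := htt ε hε
  set X : ℝ := max X₀ 1 with hXdef
  have hX1 : (1 : ℝ) ≤ X := le_max_right _ _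
  have hXpos : (0 : ℝ) < X := lt_of_lt_of_le one_pos hX1
  have hd0 : 0 < deriv S.d 0 := S.deriv_d0_pos
  set r : ℝ := S.b X / X / deriv S.d 0 with hrdef
  have hr0 : 0 ≤ r := div_nonneg (div_nonneg (S.b_nonneg X hXpos.le) hXpos.le) hd0.le
  set A : ℝ := S.d (2 * X) / (2 * X) * (2 * X * M + 2) with hAdef
  have hA0 : 0 ≤ A := by
    have h0 := S.dq_pos (2 * X) (by linarith)
    have h1 : (0:ℝ) ≤ 2 * X * M + 2 := by
      have := mul_nonneg hXpos.le hM
      linarith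
    exact mul_nonneg h0.le h1
  have hX₀X : X₀ ≤ X := le_max_left _ _
  have hM0M : M0 ≤ M := le_max_left _ _
  clear_value M c ε X r A
  refine ⟨Real.sqrt r * A / 2 + 1, by linarith [mul_nonneg (Real.sqrt_nonneg r) hA0], ?_⟩
  intro K hK n hn
  have hKpos : (0 : ℝ) < K := by exact_mod_cast hK
  have hn1 : (1 : ℝ) ≤ (n : ℝ) := by exact_mod_cast hn
  set x : ℝ := (n : ℝ) / K with hxdef
  have hx : 0 < x := by rw [hxdef]; positivity
  have hinvK : 1 / (K : ℝ) ≤ x := by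
    rw [hxdef]
    gcongr
  have hK0 : (0:ℝ) < 1 / K := by positivity
  have hx1K : x ≤ x + 1 / K := by linarith
  have hxK0 : (0:ℝ) < x + 1 / K := by linarith
  have hxx : x + 1 / (K:ℝ) = ((n:ℝ) + 1) / K := by
    rw [hxdef, ← add_div]
  have hmu1 : S.mu K (n + 1) = (K : ℝ) * S.d (x + 1 / K) := by
    rw [BD.mu, hxx]
    norm_num
  have hmu : S.mu K n = (K : ℝ) * S.d x := by rw [BD.mu, hxdef]
  have hlam : S.lam K n = (K : ℝ) * S.b x := by rw [BD.lam, hxdef]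
  clear_value x
  set l : ℝ := S.lam K n with hl_def
  set m : ℝ := S.mu K n with hm_def
  set m' : ℝ := S.mu K (n + 1) with hm'_def
  clear_value l m m'
  have hm0 : 0 < m := by
    rw [hmu]
    exact mul_pos hKpos (S.d_pos hx)
  have hl0 : 0 ≤ l := by
    rw [hlam]
    exact mul_nonneg hKpos.le (S.b_nonneg x hx.le)
  have hmm' : m ≤ m' := by
    rw [hmu, hmu1]
    exact mul_le_mul_of_nonneg_left (S.d_mono hx.le hx1K) hKpos.le
  -- increment bound
  have hinc : m' - m ≤ (M + 1 / x) * S.d (x + 1 / K) := by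
    have hii := incr_of_deriv_le S.d x (x + 1 / K) ((M + 1 / x) * S.d (x + 1 / K)) hx1K
      (fun s hs => S.d_diff s (le_trans hx.le hs.1))
      (fun s hs => by
        have hs0 : 0 < s := lt_of_lt_of_le hx hs.1
        calc deriv S.d s ≤ (M + 1 / s) * S.d s := hderiv_le s hs0
          _ ≤ (M + 1 / x) * S.d (x + 1 / K) := by
            apply mul_le_mul _ (S.d_mono hs0.le hs.2) (S.d_nonneg s hs0.le) _
            · have h1s : 1 / s ≤ 1 / x := one_div_le_one_div_of_le hx hs.1
              linarith
            · have : (0:ℝ) < 1 / x := by positivity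
              linarith)
    rw [hmu, hmu1]
    have hsimp : x + 1 / (K:ℝ) - x = 1 / K := by ring
    rw [hsimp] at hii
    have h2 := mul_le_mul_of_nonneg_left hii hKpos.le
    have h3 : (K:ℝ) * ((M + 1 / x) * S.d (x + 1 / K) * (1 / K)) = (M + 1 / x) * S.d (x + 1 / K) := by
      field_simp
    calc (K:ℝ) * S.d (x + 1 / K) - K * S.d x = K * (S.d (x + 1 / K) - S.d x) := by ring
      _ ≤ (K:ℝ) * ((M + 1 / x) * S.d (x + 1 / K) * (1 / K)) := h2
      _ = (M + 1 / x) * S.d (x + 1 / K) := h3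
  -- lam (n-1) ≤ l
  have hlam' : S.lam K (n - 1) ≤ l := by
    rw [hlam, BD.lam]
    apply mul_le_mul_of_nonneg_left _ hKpos.le
    apply S.b_mono (by positivity)
    rw [hxdef]
    gcongr
    exact_mod_cast Nat.sub_le n 1
  -- key inequality
  have hkey : l + m - Real.sqrt (l * m') - Real.sqrt (l * m) ≤ S.Vpot K n := by
    rw [BD.Vpot, ← hl_def, ← hm_def, ← hm'_def]
    have hite : (if 1 < n then Real.sqrt (S.lam K (n - 1) * m) else 0) ≤ Real.sqrt (l * m) := by
      split_ifs with h
      · exact Real.sqrt_le_sqrt (mul_le_mul_of_nonneg_right hlam' hm0.le)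
      · exact Real.sqrt_nonneg _
    linarith
  -- sqrt splitting
  set t : ℝ := (m' - m) / (2 * Real.sqrt m) with htdef
  clear_value t
  have hsqm : 0 < Real.sqrt m := Real.sqrt_pos.2 hm0
  have ht0 : 0 ≤ t := by
    rw [htdef]
    exact div_nonneg (by linarith) (by positivity)
  have hts : Real.sqrt m * t = (m' - m) / 2 := by
    rw [htdef]
    field_simp
  have hsplit : Real.sqrt (l * m') ≤ Real.sqrt l * Real.sqrt m + Real.sqrt l * t := by
    have h2t : t * (2 * Real.sqrt m) = m' - m := by
      rw [htdef]
      field_simp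
    have hsq : m' ≤ (Real.sqrt m + t) ^ 2 := by
      have hexp : (Real.sqrt m + t) ^ 2
          = Real.sqrt m ^ 2 + t * (2 * Real.sqrt m) + t ^ 2 := by ring
      rw [hexp, h2t, Real.sq_sqrt hm0.le]
      linarith [sq_nonneg t]
    have hle : Real.sqrt m' ≤ Real.sqrt m + t := by
      calc Real.sqrt m' ≤ Real.sqrt ((Real.sqrt m + t) ^ 2) := Real.sqrt_le_sqrt hsq
        _ = Real.sqrt m + t := Real.sqrt_sq (by positivity)
    calc Real.sqrt (l * m') = Real.sqrt l * Real.sqrt m' := Real.sqrt_mul hl0 _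
      _ ≤ Real.sqrt l * (Real.sqrt m + t) :=
          mul_le_mul_of_nonneg_left hle (Real.sqrt_nonneg l)
      _ = Real.sqrt l * Real.sqrt m + Real.sqrt l * t := by ring
  have hamgm : 2 * (Real.sqrt l * Real.sqrt m) ≤ l + m := by
    have hexp : (Real.sqrt l - Real.sqrt m) ^ 2
        = Real.sqrt l ^ 2 - 2 * (Real.sqrt l * Real.sqrt m) + Real.sqrt m ^ 2 := by ring
    have h := sq_nonneg (Real.sqrt l - Real.sqrt m)
    rw [hexp, Real.sq_sqrt hl0, Real.sq_sqrt hm0.le] at h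
    linarith
  have hsqlm : Real.sqrt (l * m) = Real.sqrt l * Real.sqrt m := Real.sqrt_mul hl0 _
  by_cases hcase : x < X
  · -- small x region
    have hq : S.b x / x ≤ S.b X / X := S.bq_mono.monotoneOn hx hXpos hcase.le
    have hbx' : S.b x ≤ S.b X / X * x := by
      have h5 := mul_le_mul_of_nonneg_right hq hx.le
      rwa [div_mul_cancel₀ _ hx.ne'] at h5
    have hbx : S.b x ≤ r * S.d x := by
      have hdx' : deriv S.d 0 * x ≤ S.d x := S.d_lb hx
      have heq : S.b X / X * x = r * (deriv S.d 0 * x) := by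
        rw [hrdef]
        field_simp
      calc S.b x ≤ S.b X / X * x := hbx'
        _ = r * (deriv S.d 0 * x) := heq
        _ ≤ r * S.d x := mul_le_mul_of_nonneg_left hdx' hr0
    have hlrm : l ≤ r * m := by
      rw [hlam, hmu]
      calc (K:ℝ) * S.b x ≤ K * (r * S.d x) := mul_le_mul_of_nonneg_left hbx hKpos.le
        _ = r * ((K:ℝ) * S.d x) := by ring
    have hsl : Real.sqrt l ≤ Real.sqrt r * Real.sqrt m := by
      rw [← Real.sqrt_mul hr0]
      exact Real.sqrt_le_sqrt hlrm
    have hmmA : m' - m ≤ A := by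
      have hd2x : S.d (x + 1 / K) ≤ S.d (2 * x) := S.d_mono hxK0.le (by linarith)
      have hq2X : 0 ≤ S.d (2 * X) / (2 * X) := (S.dq_pos _ (by linarith)).le
      have hd2x' : S.d (2 * x) ≤ S.d (2 * X) / (2 * X) * (2 * x) := by
        have hq2 : S.d (2 * x) / (2 * x) ≤ S.d (2 * X) / (2 * X) :=
          S.dq_mono.monotoneOn (Set.mem_Ioi.2 (by linarith)) (Set.mem_Ioi.2 (by linarith))
            (by linarith)
        have h6 := mul_le_mul_of_nonneg_right hq2 (by linarith : (0:ℝ) ≤ 2 * x)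
        rwa [div_mul_cancel₀ _ (by linarith : (2:ℝ) * x ≠ 0)] at h6
      have hstep : (M + 1 / x) * S.d (x + 1 / K)
          ≤ (M + 1 / x) * (S.d (2 * X) / (2 * X) * (2 * x)) := by
        apply mul_le_mul_of_nonneg_left (le_trans hd2x hd2x')
        have : (0:ℝ) < 1 / x := by positivity
        linarith
      have heq2 : (M + 1 / x) * (S.d (2 * X) / (2 * X) * (2 * x))
          = S.d (2 * X) / (2 * X) * (2 * x * M + 2) := by
        field_simp
      have hlast : S.d (2 * X) / (2 * X) * (2 * x * M + 2) ≤ A := by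
        rw [hAdef]
        apply mul_le_mul_of_nonneg_left _ hq2X
        have := mul_le_mul_of_nonneg_right hcase.le hM
        linarith
      calc m' - m ≤ (M + 1 / x) * S.d (x + 1 / K) := hinc
        _ ≤ (M + 1 / x) * (S.d (2 * X) / (2 * X) * (2 * x)) := hstep
        _ = S.d (2 * X) / (2 * X) * (2 * x * M + 2) := heq2
        _ ≤ A := hlast
    have hpen : Real.sqrt l * t ≤ Real.sqrt r * A / 2 := by
      have h1 : Real.sqrt l * t ≤ Real.sqrt r * Real.sqrt m * t :=
        mul_le_mul_of_nonneg_right hsl ht0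
      have h2 : Real.sqrt r * Real.sqrt m * t = Real.sqrt r * ((m' - m) / 2) := by
        rw [mul_assoc, hts]
      have h4 : Real.sqrt r * ((m' - m) / 2) ≤ Real.sqrt r * A / 2 := by
        have := mul_le_mul_of_nonneg_left hmmA (Real.sqrt_nonneg r)
        linarith
      linarith
    have hfin : -(Real.sqrt r * A / 2 + 1) ≤ l + m - Real.sqrt (l * m') - Real.sqrt (l * m) := by
      rw [hsqlm]
      linarith [hsplit, hamgm, hpen]
    linarith
  · -- large x region
    push_neg at hcase
    have hx1 : (1:ℝ) ≤ x := le_trans hX1 hcase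
    have hbε : S.b x ≤ ε * S.d x := by
      have hd := hX₀ x (le_trans hX₀X hcase)
      rw [Real.dist_eq, sub_zero] at hd
      have hdx := S.d_pos hx
      have h7 : S.b x / S.d x ≤ ε := (lt_of_abs_lt hd).le
      rw [div_le_iff₀ hdx] at h7
      linarith
    have hlεm : l ≤ ε * m := by
      rw [hlam, hmu]
      calc (K:ℝ) * S.b x ≤ K * (ε * S.d x) := mul_le_mul_of_nonneg_left hbε hKpos.le
        _ = ε * ((K:ℝ) * S.d x) := by ring
    have hsl : Real.sqrt l ≤ Real.sqrt ε * Real.sqrt m := by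
      rw [← Real.sqrt_mul hε.le]
      exact Real.sqrt_le_sqrt hlεm
    have hlog : Real.log (S.d (x + 1)) - Real.log (S.d x) ≤ (M + 1) * (x + 1 - x) := by
      apply incr_of_deriv_le (fun s => Real.log (S.d s)) x (x + 1) (M + 1) (by linarith)
      · intro s hs
        have hs0 : 0 < s := lt_of_lt_of_le hx hs.1
        exact ((S.d_diff s hs0.le).hasDerivAt.log (S.d_pos hs0).ne').differentiableAt
      · intro s hs
        have hs0 : 0 < s := lt_of_lt_of_le hx hs.1
        have hds := S.d_pos hs0
        rw [((S.d_diff s hs0.le).hasDerivAt.log hds.ne').deriv]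
        have h1 : deriv S.d s / S.d s ≤ M + 1 / s := by
          have := hM0 s hs0
          linarith [hM0M]
        have h2 : 1 / s ≤ 1 := by
          rw [div_le_one hs0]
          linarith [hs.1]
        linarith
    have hdx1 : S.d (x + 1) ≤ Real.exp (M + 1) * S.d x := by
      have hdxp := S.d_pos hx
      have hdx1p := S.d_pos (show (0:ℝ) < x + 1 by linarith)
      have h8 : Real.log (S.d (x + 1)) ≤ (M + 1) + Real.log (S.d x) := by
        have : (M + 1) * (x + 1 - x) = M + 1 := by ring
        rw [this] at hlog
        linarith
      calc S.d (x + 1) = Real.exp (Real.log (S.d (x + 1))) := (Real.exp_log hdx1p).symm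
        _ ≤ Real.exp ((M + 1) + Real.log (S.d x)) := Real.exp_le_exp.2 h8
        _ = Real.exp (M + 1) * S.d x := by rw [Real.exp_add, Real.exp_log hdxp]
    have hmmc : m' - m ≤ c * S.d x := by
      have hK1 : 1 / (K:ℝ) ≤ 1 := by
        rw [div_le_one hKpos]
        exact_mod_cast hK
      have hstep : (M + 1 / x) * S.d (x + 1 / K) ≤ (M + 1) * S.d (x + 1) := by
        apply mul_le_mul _ (S.d_mono hxK0.le (by linarith)) (S.d_nonneg _ hxK0.le) (by linarith)
        have : 1 / x ≤ 1 := by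
          rw [div_le_one hx]
          linarith
        linarith
      calc m' - m ≤ (M + 1 / x) * S.d (x + 1 / K) := hinc
        _ ≤ (M + 1) * S.d (x + 1) := hstep
        _ ≤ (M + 1) * (Real.exp (M + 1) * S.d x) :=
            mul_le_mul_of_nonneg_left hdx1 (by linarith)
        _ = c * S.d x := by rw [hcdef]; ring
    have hdxm : S.d x ≤ m := by
      rw [hmu]
      have h9 : (1:ℝ) ≤ K := by exact_mod_cast hK
      have := mul_le_mul_of_nonneg_right h9 (S.d_nonneg x hx.le)
      linarith
    have hmmcm : m' - m ≤ c * m := le_trans hmmc (mul_le_mul_of_nonneg_left hdxm hc.le)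
    have hslm : Real.sqrt l * Real.sqrt m ≤ Real.sqrt ε * m := by
      calc Real.sqrt l * Real.sqrt m ≤ Real.sqrt ε * Real.sqrt m * Real.sqrt m :=
            mul_le_mul_of_nonneg_right hsl (Real.sqrt_nonneg m)
        _ = Real.sqrt ε * m := by rw [mul_assoc, Real.mul_self_sqrt hm0.le]
    have hpen : Real.sqrt l * t ≤ c * (Real.sqrt ε * m) / 2 := by
      have h1 : Real.sqrt l * t ≤ Real.sqrt ε * Real.sqrt m * t :=
        mul_le_mul_of_nonneg_right hsl ht0
      have h2 : Real.sqrt ε * Real.sqrt m * t = Real.sqrt ε * ((m' - m) / 2) := by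
        rw [mul_assoc, hts]
      have h4 : Real.sqrt ε * ((m' - m) / 2) ≤ Real.sqrt ε * (c * m) / 2 := by
        have := mul_le_mul_of_nonneg_left hmmcm (Real.sqrt_nonneg ε)
        linarith
      have h5 : Real.sqrt ε * (c * m) / 2 = c * (Real.sqrt ε * m) / 2 := by ring
      linarith
    have hu : Real.sqrt ε * m * (2 + c) = m := by
      rw [hsqrtε]
      field_simp
    have hC0 : 0 ≤ c * (Real.sqrt ε * m) := by positivity
    have hfin : (0:ℝ) ≤ l + m - Real.sqrt (l * m') - Real.sqrt (l * m) := by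
      rw [hsqlm]
      linarith [hsplit, hslm, hpen, hu, hl0, hC0]
    have hξ : (0:ℝ) ≤ Real.sqrt r * A / 2 + 1 := by positivity
    linarith
end
end

section
/- Fix a positive integer K, and let ξ ≥ 0 satisfy V_n(K') ≥ −ξ for all n ≥ 1 and all positive integers K'. Let δ > 0, ρ ∈ ℝ, and let φ be a real sequence on ℤ_{>0} with ‖φ‖_{ℓ²} = 1 decaying exponentially fast at infinity (i.e., |φ(n)| ≤ c θ^n for some c > 0, θ ∈ (0,1)), such that ‖𝓛_K φ + ρ φ‖_{ℓ²} ≤ δ. Then Σ_{n≥1} √(λ_n^K μ_{n+1}^K) (φ(n+1) − φ(n))² + Σ_{n≥1} max(1, V_n(K)) φ(n)² ≤ 1 + ρ + ξ + δ + (1/2)√(λ_1^K μ_2^K). -/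
/-!
With `a n = √(λ_n μ_{n+1})`, on indices `n ≥ 1` the operator reads
`𝓛_K v (n) = a n (v (n+1) - v n) - a (n-1) (v n - v (n-1)) - V_n v n`, and `a 0 = 0`.
Summation by parts therefore turns `-⟨φ, 𝓛_K φ⟩` into the energy
`∑ a n (φ (n+1) - φ n)² + ∑ V_n φ(n)²` with no boundary term, and by Cauchy–Schwarz
`-⟨φ, 𝓛_K φ⟩ = ρ - ⟨φ, 𝓛_K φ + ρ φ⟩ ≤ ρ + δ`. Replacing `V_n` by `max 1 V_n` costs at most
`(1 + ξ) ‖φ‖² = 1 + ξ`. All the series converge because `log b(x)/x, log d(x)/x → 0` makes the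
rates grow slower than any geometric sequence, while `φ` decays geometrically.
-/

open Filter MeasureTheory
open scoped BigOperators Topology ENNReal Classical

noncomputable section

/-- The symmetrized generator `𝓛_K` acting on real sequences (index `0` is unused). -/
def BD.opLR (S : BD) (K : ℕ) (v : ℕ → ℝ) (n : ℕ) : ℝ :=
  Real.sqrt (S.lam K n * S.mu K (n + 1)) * v (n + 1)
  + (if 1 < n then Real.sqrt (S.lam K (n - 1) * S.mu K n) * v (n - 1) else 0)
  - (S.lam K n + S.mu K n) * v n

open Asymptotics

lemma isBigO_exp_mul_of_tendsto_log_div {f : ℝ → ℝ} (hpos : ∀ᶠ x in atTop, 0 < f x)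
    (hlog : Tendsto (fun x => Real.log (f x) / x) atTop (𝓝 0)) {ε : ℝ} (hε : 0 < ε) :
    f =O[atTop] fun x => Real.exp (ε * x) := by
  refine IsBigO.of_bound 1 ?_
  filter_upwards [hpos, hlog.eventually_lt_const hε, eventually_gt_atTop 0] with x hfx hlt hx
  rw [one_mul, Real.norm_of_nonneg hfx.le, Real.norm_of_nonneg (Real.exp_pos _).le]
  exact (Real.log_le_iff_le_exp hfx).mp ((div_lt_iff₀ hx).mp hlt).le

lemma isBigO_pow_of_tendsto_log_div {f : ℝ → ℝ} (hpos : ∀ᶠ x in atTop, 0 < f x)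
    (hlog : Tendsto (fun x => Real.log (f x) / x) atTop (𝓝 0)) {K : ℕ} (hK : K ≠ 0)
    {r : ℝ} (hr : 1 < r) :
    (fun n : ℕ => (K : ℝ) * f (n / K)) =O[atTop] (r ^ ·) := by
  have hK' : (0 : ℝ) < K := by positivity
  have hf := (isBigO_exp_mul_of_tendsto_log_div hpos hlog
    (mul_pos hK' (Real.log_pos hr))).comp_tendsto
    (tendsto_natCast_atTop_atTop.atTop_div_const hK')
  refine (hf.const_mul_left (K : ℝ)).congr_right fun n => ?_
  rw [Function.comp_apply, mul_comm (K : ℝ), mul_assoc, mul_div_cancel₀ _ hK'.ne', mul_comm,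
    Real.exp_nat_mul, Real.exp_log (by linarith)]

lemma Asymptotics.IsBigO.comp_add_pow {f : ℕ → ℝ} {r : ℝ} (h : f =O[atTop] (r ^ ·)) (k : ℕ) :
    (fun n => f (n + k)) =O[atTop] (r ^ ·) :=
  (h.comp_tendsto (tendsto_add_atTop_nat k)).trans <|
    (isBigO_const_mul_self (r ^ k) (r ^ ·) atTop).congr_left fun n => by
      rw [Function.comp_apply, pow_add, mul_comm]

lemma summable_mul_mul_of_isBigO {g v w : ℕ → ℝ} {θ : ℝ} (hθ0 : 0 < θ) (hθ1 : θ < 1)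
    (hg : g =O[atTop] (θ⁻¹ ^ ·)) (hv : v =O[atTop] (θ ^ ·)) (hw : w =O[atTop] (θ ^ ·)) :
    Summable fun n => g n * (v n * w n) :=
  summable_of_isBigO_nat (summable_geometric_of_lt_one hθ0.le hθ1) <|
    (hg.mul (hv.mul hw)).congr_right fun n => by
      rw [inv_pow, inv_mul_cancel_left₀ (pow_ne_zero n hθ0.ne')]

lemma summable_mul_and_abs_tsum_mul_le {ι : Type*} {x y : ι → ℝ}
    (hx : Summable fun i => x i ^ 2) (hy : Summable fun i => y i ^ 2) :
    Summable (fun i => x i * y i) ∧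
      |∑' i, x i * y i| ≤ √(∑' i, x i ^ 2) * √(∑' i, y i ^ 2) := by
  obtain ⟨hs, hle⟩ := Real.summable_and_inner_le_Lp_mul_Lq_tsum_of_nonneg
    Real.HolderConjugate.two_two (f := fun i => |x i|) (g := fun i => |y i|)
    (fun _ => abs_nonneg _) (fun _ => abs_nonneg _)
    (by simpa only [Real.rpow_two, sq_abs] using hx) (by simpa only [Real.rpow_two, sq_abs] using hy)
  simp only [Real.rpow_two, sq_abs, ← Real.sqrt_eq_rpow, ← abs_mul] at hs hle
  exact ⟨hs.of_abs, (norm_tsum_le_tsum_norm (f := fun i => x i * y i) hs).trans hle⟩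

lemma neg_tsum_mul_le_of_sqrt_tsum_sq_le {ι : Type*} {x y : ι → ℝ} {ρ δ : ℝ}
    (hx : Summable fun i => x i ^ 2) (hx1 : ∑' i, x i ^ 2 = 1)
    (hy : Summable fun i => (y i + ρ * x i) ^ 2) (hδ : √(∑' i, (y i + ρ * x i) ^ 2) ≤ δ) :
    -∑' i, x i * y i ≤ ρ + δ := by
  obtain ⟨hs, hle⟩ := summable_mul_and_abs_tsum_mul_le hx hy
  have hxy : Summable fun i => x i * y i := (hs.sub (hx.mul_left ρ)).congr fun i => by ring
  have hsplit : ∑' i, x i * (y i + ρ * x i) = ∑' i, x i * y i + ρ :=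
    calc _ = ∑' i, (x i * y i + ρ * x i ^ 2) := tsum_congr fun i => by ring
      _ = _ := by rw [hxy.tsum_add (hx.mul_left ρ), tsum_mul_left, hx1, mul_one]
  rw [hx1, Real.sqrt_one, one_mul] at hle
  linarith [neg_abs_le (∑' i, x i * (y i + ρ * x i))]

lemma summable_max_one_mul_and_tsum_le {ι : Type*} {f w : ι → ℝ} {ξ : ℝ} (hξ : 0 ≤ ξ)
    (hf : ∀ i, -ξ ≤ f i) (hw0 : ∀ i, 0 ≤ w i) (hw : Summable w)
    (hfw : Summable fun i => f i * w i) :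
    Summable (fun i => max 1 (f i) * w i) ∧
      ∑' i, max 1 (f i) * w i ≤ ∑' i, f i * w i + (1 + ξ) * ∑' i, w i := by
  have hgap : ∀ i, (max 1 (f i) - f i) * w i ≤ (1 + ξ) * w i := fun i =>
    mul_le_mul_of_nonneg_right (by have := hf i; rcases max_cases 1 (f i) <;> linarith) (hw0 i)
  have hgap_sum : Summable fun i => (max 1 (f i) - f i) * w i :=
    .of_nonneg_of_le (fun i => mul_nonneg (sub_nonneg.mpr (le_max_right _ _)) (hw0 i)) hgap
      (hw.mul_left _)
  have hsum : Summable (fun i => max 1 (f i) * w i) := by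
    simpa only [sub_mul, add_sub_cancel] using hfw.add hgap_sum
  refine ⟨hsum, ?_⟩
  rw [← tsum_mul_left, ← hfw.tsum_add (hw.mul_left _)]
  exact hsum.tsum_le_tsum (fun i => by linarith [hgap i]) (hfw.add (hw.mul_left _))

lemma tsum_dirichlet_add_tsum_potential {a V v : ℕ → ℝ} (ha0 : a 0 = 0)
    (hD : Summable fun n => a (n + 1) * (v (n + 2) - v (n + 1)) ^ 2)
    (hP : Summable fun n => V (n + 1) * v (n + 1) ^ 2)
    (hU : Summable fun n => a n * (v (n + 1) * (v (n + 1) - v n))) :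
    ∑' n, a (n + 1) * (v (n + 2) - v (n + 1)) ^ 2 + ∑' n, V (n + 1) * v (n + 1) ^ 2 =
      -∑' n, v (n + 1) * (a (n + 1) * (v (n + 2) - v (n + 1)) - a n * (v (n + 1) - v n)
        - V (n + 1) * v (n + 1)) := by
  set u := fun n => a n * (v (n + 1) * (v (n + 1) - v n))
  have hU1 : Summable fun n => u (n + 1) := (summable_nat_add_iff 1).mpr hU
  have htel : HasSum (fun n => u (n + 1) - u n) 0 := by
    have h := hU1.hasSum.sub hU.hasSum
    rwa [hU.tsum_eq_zero_add, show u 0 = 0 by simp [u, ha0], zero_add, sub_self] at h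
  have h := (hD.hasSum.add hP.hasSum).sub htel
  rw [sub_zero] at h
  rw [← tsum_neg, ← h.tsum_eq]
  exact tsum_congr fun n => by simp only [u]; ring

namespace BD

variable (S : BD) {K : ℕ}

lemma b_pos_s14 {x : ℝ} (hx : 0 < x) : 0 < S.b x := (div_pos_iff_of_pos_right hx).mp (S.bq_pos x hx)

lemma d_pos_s14 {x : ℝ} (hx : 0 < x) : 0 < S.d x := (div_pos_iff_of_pos_right hx).mp (S.dq_pos x hx)

lemma lam_nonneg (n : ℕ) : 0 ≤ S.lam K n :=
  mul_nonneg K.cast_nonneg (S.b_nonneg _ (by positivity))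

lemma mu_nonneg (n : ℕ) : 0 ≤ S.mu K n :=
  mul_nonneg K.cast_nonneg (S.d_nonneg _ (by positivity))

lemma lam_zero : S.lam K 0 = 0 := by
  simp [lam, S.b_zero]

lemma lam_isBigO (hK : K ≠ 0) {r : ℝ} (hr : 1 < r) : S.lam K =O[atTop] (r ^ ·) :=
  isBigO_pow_of_tendsto_log_div ((eventually_gt_atTop 0).mono fun _ => S.b_pos_s14) S.logb_small hK hr

lemma mu_isBigO (hK : K ≠ 0) {r : ℝ} (hr : 1 < r) : S.mu K =O[atTop] (r ^ ·) :=
  isBigO_pow_of_tendsto_log_div ((eventually_gt_atTop 0).mono fun _ => S.d_pos_s14) S.logd_small hK hr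

def offDiag (K n : ℕ) : ℝ := √(S.lam K n * S.mu K (n + 1))

lemma offDiag_zero : S.offDiag K 0 = 0 := by
  simp [offDiag, lam_zero]

lemma offDiag_isBigO (hK : K ≠ 0) {r : ℝ} (hr : 1 < r) : S.offDiag K =O[atTop] (r ^ ·) := by
  refine (isBigO_of_le _ fun n => ?_).trans
    ((S.lam_isBigO hK hr).add ((S.mu_isBigO hK hr).comp_add_pow 1))
  have := S.lam_nonneg (K := K) n
  have := S.mu_nonneg (K := K) (n + 1)
  rw [offDiag, Real.norm_of_nonneg (Real.sqrt_nonneg _), Real.norm_of_nonneg (by positivity)]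
  exact Real.sqrt_le_iff.mpr ⟨by positivity, by nlinarith⟩

lemma Vpot_succ (n : ℕ) :
    S.Vpot K (n + 1) = S.lam K (n + 1) + S.mu K (n + 1) - S.offDiag K (n + 1) - S.offDiag K n := by
  cases n with
  | zero => simp [Vpot, offDiag, lam_zero]
  | succ n => simp [Vpot, offDiag]

lemma Vpot_succ_isBigO (hK : K ≠ 0) {r : ℝ} (hr : 1 < r) :
    (fun n => S.Vpot K (n + 1)) =O[atTop] (r ^ ·) := by
  simp_rw [Vpot_succ]
  exact ((((S.lam_isBigO hK hr).comp_add_pow 1).add ((S.mu_isBigO hK hr).comp_add_pow 1)).sub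
    ((S.offDiag_isBigO hK hr).comp_add_pow 1)).sub (S.offDiag_isBigO hK hr)

lemma opLR_succ (v : ℕ → ℝ) (n : ℕ) :
    S.opLR K v (n + 1) = S.offDiag K (n + 1) * (v (n + 2) - v (n + 1))
      - S.offDiag K n * (v (n + 1) - v n) - S.Vpot K (n + 1) * v (n + 1) := by
  rw [Vpot_succ]
  cases n with
  | zero => rw [opLR, if_neg (by omega), offDiag_zero, offDiag]; ring
  | succ n => rw [opLR, if_pos (by omega), Nat.add_sub_cancel, offDiag, offDiag]; ring

end BD

theorem statement14_general (S : BD) (K : ℕ) (hK : 1 ≤ K) (ξ : ℝ) (hξ : 0 ≤ ξ)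
    (hV : ∀ K' : ℕ, 1 ≤ K' → ∀ n : ℕ, 1 ≤ n → -ξ ≤ S.Vpot K' n)
    (δ : ℝ) (ρ : ℝ) (φ : ℕ → ℝ)
    (hsum : Summable (fun n : ℕ => (φ (n + 1)) ^ 2))
    (hnorm : ∑' n : ℕ, (φ (n + 1)) ^ 2 = 1)
    (hdecay : ∃ c : ℝ, 0 < c ∧ ∃ θ : ℝ, 0 < θ ∧ θ < 1 ∧ ∀ n : ℕ, |φ n| ≤ c * θ ^ n)
    (herr_sum : Summable (fun n : ℕ => (S.opLR K φ (n + 1) + ρ * φ (n + 1)) ^ 2))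
    (herr : Real.sqrt (∑' n : ℕ, (S.opLR K φ (n + 1) + ρ * φ (n + 1)) ^ 2) ≤ δ) :
    Summable (fun n : ℕ => Real.sqrt (S.lam K (n + 1) * S.mu K (n + 2)) *
      (φ (n + 2) - φ (n + 1)) ^ 2) ∧
    Summable (fun n : ℕ => max 1 (S.Vpot K (n + 1)) * (φ (n + 1)) ^ 2) ∧
    (∑' n : ℕ, Real.sqrt (S.lam K (n + 1) * S.mu K (n + 2)) * (φ (n + 2) - φ (n + 1)) ^ 2)
      + (∑' n : ℕ, max 1 (S.Vpot K (n + 1)) * (φ (n + 1)) ^ 2)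
      ≤ 1 + ρ + ξ + δ + (1 / 2) * Real.sqrt (S.lam K 1 * S.mu K 2) := by
  obtain ⟨c, -, θ, hθ0, hθ1, hφ⟩ := hdecay
  have hK0 : K ≠ 0 := by omega
  have hr : 1 < θ⁻¹ := one_lt_inv₀ hθ0 |>.mpr hθ1
  have hφO : φ =O[atTop] (θ ^ ·) := .of_bound c <| .of_forall fun n => by
    rw [Real.norm_eq_abs, Real.norm_of_nonneg (pow_nonneg hθ0.le n)]
    exact hφ n
  have hφ1 := hφO.comp_add_pow 1
  have hD : Summable fun n => S.offDiag K (n + 1) * (φ (n + 2) - φ (n + 1)) ^ 2 := by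
    have hdiff := (hφO.comp_add_pow 2).sub hφ1
    simpa only [sq] using summable_mul_mul_of_isBigO hθ0 hθ1
      ((S.offDiag_isBigO hK0 hr).comp_add_pow 1) hdiff hdiff
  have hP : Summable fun n => S.Vpot K (n + 1) * φ (n + 1) ^ 2 := by
    simpa only [sq] using summable_mul_mul_of_isBigO hθ0 hθ1 (S.Vpot_succ_isBigO hK0 hr) hφ1 hφ1
  have hU : Summable fun n => S.offDiag K n * (φ (n + 1) * (φ (n + 1) - φ n)) :=
    summable_mul_mul_of_isBigO hθ0 hθ1 (S.offDiag_isBigO hK0 hr) hφ1 (hφ1.sub hφO)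
  obtain ⟨hmax, hmax_le⟩ := summable_max_one_mul_and_tsum_le hξ
    (fun n => hV K hK (n + 1) n.succ_pos) (fun n => sq_nonneg (φ (n + 1))) hsum hP
  have henergy := tsum_dirichlet_add_tsum_potential S.offDiag_zero hD hP hU
  simp only [← S.opLR_succ] at henergy
  have hrayleigh := neg_tsum_mul_le_of_sqrt_tsum_sq_le hsum hnorm herr_sum herr
  rw [hnorm, mul_one] at hmax_le
  refine ⟨hD, hmax, ?_⟩
  change ∑' n, S.offDiag K (n + 1) * (φ (n + 2) - φ (n + 1)) ^ 2 + _ ≤ _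
  linarith [Real.sqrt_nonneg (S.lam K 1 * S.mu K 2)]

/-- Energy bound for approximate eigenvectors of `𝓛_K`. -/
theorem statement14 (S : BD) (K : ℕ) (hK : 1 ≤ K) (ξ : ℝ) (hξ : 0 ≤ ξ)
    (hV : ∀ K' : ℕ, 1 ≤ K' → ∀ n : ℕ, 1 ≤ n → -ξ ≤ S.Vpot K' n)
    (δ : ℝ) (hδ : 0 < δ) (ρ : ℝ) (φ : ℕ → ℝ)
    (hsum : Summable (fun n : ℕ => (φ (n + 1)) ^ 2))
    (hnorm : ∑' n : ℕ, (φ (n + 1)) ^ 2 = 1)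
    (hdecay : ∃ c : ℝ, 0 < c ∧ ∃ θ : ℝ, 0 < θ ∧ θ < 1 ∧ ∀ n : ℕ, |φ n| ≤ c * θ ^ n)
    (herr_sum : Summable (fun n : ℕ => (S.opLR K φ (n + 1) + ρ * φ (n + 1)) ^ 2))
    (herr : Real.sqrt (∑' n : ℕ, (S.opLR K φ (n + 1) + ρ * φ (n + 1)) ^ 2) ≤ δ) :
    Summable (fun n : ℕ => Real.sqrt (S.lam K (n + 1) * S.mu K (n + 2)) *
      (φ (n + 2) - φ (n + 1)) ^ 2) ∧
    Summable (fun n : ℕ => max 1 (S.Vpot K (n + 1)) * (φ (n + 1)) ^ 2) ∧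
    (∑' n : ℕ, Real.sqrt (S.lam K (n + 1) * S.mu K (n + 2)) * (φ (n + 2) - φ (n + 1)) ^ 2)
      + (∑' n : ℕ, max 1 (S.Vpot K (n + 1)) * (φ (n + 1)) ^ 2)
      ≤ 1 + ρ + ξ + δ + (1 / 2) * Real.sqrt (S.lam K 1 * S.mu K 2) :=
  statement14_general S K hK ξ hξ hV δ ρ φ hsum hnorm hdecay herr_sum herr
end
end

section
/- Let H be a complex Hilbert space, A : H → H a bounded self-adjoint operator, and (e_i)_{i ∈ ι} a Hilbert (orthonormal) basis of H consisting of eigenvectors of A: A e_i = λ_i e_i with λ_i ∈ ℝ. Assume there is δ > 0 such that |λ_i − λ_j| ≥ δ whenever λ_i ≠ λ_j, and that each eigenvalue is simple (λ_i ≠ λ_j for i ≠ j). Let ω ∈ ℝ, 0 < ε < δ, and u ∈ H with ‖u‖ = 1 and ‖A u − ω u‖ ≤ ε. Then there exists an index i with |ω − λ_i| ≤ ε and a real θ such that ‖u − e^{iθ} e_i‖ ≤ 2ε/(δ − ε). -/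
/-!
Expanding in the eigenbasis, `‖Au - ωu‖² = ∑ (λᵢ - ω)² |⟨eᵢ, u⟩|² ≤ ε²` while `∑ |⟨eᵢ, u⟩|² = 1`,
so some `λᵢ` lies within `ε` of `ω`. By the gap every other `λⱼ` is at least `δ - ε` away from `ω`,
so the component `v` of `u` orthogonal to `eᵢ` has `‖v‖ ≤ ε / (δ - ε)`. Turning `eᵢ` to the phase
of `⟨eᵢ, u⟩` costs a further `1 - |⟨eᵢ, u⟩| ≤ 1 - |⟨eᵢ, u⟩|² = ‖v‖² ≤ ‖v‖`.
-/

open scoped InnerProductSpace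

theorem exists_le_of_hasSum_mul_le {ι : Type*} {p f : ι → ℝ} {S s : ℝ} (hp : 0 ≤ p)
    (hp1 : HasSum p 1) (hfp : HasSum (fun i => f i * p i) S) (hS : S ≤ s) :
    ∃ i, f i ≤ s := by
  by_contra! hlt
  obtain ⟨i, hi⟩ : ∃ i, p i ≠ 0 := by
    by_contra! h0
    exact one_ne_zero (hp1.unique (by simp [funext h0]))
  have : s * 1 < S :=
    hasSum_lt (fun j => mul_le_mul_of_nonneg_right (hlt j).le (hp j))
      (mul_lt_mul_of_pos_right (hlt i) ((hp i).lt_of_ne' hi)) (hp1.mul_left s) hfp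
  linarith

theorem mul_one_sub_le_of_hasSum_mul {ι : Type*} {p f : ι → ℝ} {S m : ℝ} {i : ι} (hp : 0 ≤ p)
    (hp1 : HasSum p 1) (hfp : HasSum (fun j => f j * p j) S) (hfi : 0 ≤ f i)
    (hm : ∀ j ≠ i, m ≤ f j) : m * (1 - p i) ≤ S := by
  classical
  have h := (hp1.mul_left m).update i 0
  refine le_of_eq_of_le (by ring) (hasSum_le (fun j => ?_) h hfp)
  rcases eq_or_ne j i with rfl | hj
  · simpa using mul_nonneg hfi (hp j)
  · simpa [hj] using mul_le_mul_of_nonneg_right (hm j hj) (hp j)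

section InnerProduct

variable {𝕜 E : Type*} [RCLike 𝕜] [NormedAddCommGroup E] [InnerProductSpace 𝕜 E]

theorem HilbertBasis.hasSum_norm_inner_sq {ι : Type*} (b : HilbertBasis ι 𝕜 E) (x : E) :
    HasSum (fun i => ‖⟪b i, x⟫_𝕜‖ ^ 2) (‖x‖ ^ 2) := by
  simpa [b.repr_apply_apply, b.repr.norm_map] using
    lp.hasSum_norm (p := 2) (by norm_num) (b.repr x)

theorem norm_inner_apply_sub_smul_of_apply_eq_smul {A : E →L[𝕜] E} {x : E} {μ : ℝ}
    (hA : ∀ y, ⟪A x, y⟫_𝕜 = ⟪x, A y⟫_𝕜) (hx : A x = (μ : 𝕜) • x) (ω : ℝ) (u : E) :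
    ‖⟪x, A u - (ω : 𝕜) • u⟫_𝕜‖ = |μ - ω| * ‖⟪x, u⟫_𝕜‖ := by
  rw [inner_sub_right, inner_smul_right, ← hA, hx, inner_smul_left, RCLike.conj_ofReal, ← sub_mul,
    ← RCLike.ofReal_sub, norm_mul, RCLike.norm_ofReal]

theorem norm_sub_inner_smul_sq {e : E} (he : ‖e‖ = 1) (u : E) :
    ‖u - ⟪e, u⟫_𝕜 • e‖ ^ 2 = ‖u‖ ^ 2 - ‖⟪e, u⟫_𝕜‖ ^ 2 := by
  have horth : ⟪u - ⟪e, u⟫_𝕜 • e, ⟪e, u⟫_𝕜 • e⟫_𝕜 = 0 := by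
    rw [inner_smul_right, inner_sub_left, inner_smul_left, inner_self_eq_norm_sq_to_K, he]
    simp [inner_conj_symm]
  have h := norm_add_sq_eq_norm_sq_add_norm_sq_of_inner_eq_zero _ _ horth
  rw [sub_add_cancel, norm_smul, he, mul_one] at h
  linarith

end InnerProduct

theorem norm_sub_exp_arg_smul_le {E : Type*} [NormedAddCommGroup E] [InnerProductSpace ℂ E]
    {u e : E} (hu : ‖u‖ = 1) (he : ‖e‖ = 1) :
    ‖u - Complex.exp ((⟪e, u⟫_ℂ).arg * Complex.I) • e‖ ≤ 2 * ‖u - ⟪e, u⟫_ℂ • e‖ := by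
  set c := ⟪e, u⟫_ℂ
  set z := Complex.exp (c.arg * Complex.I)
  set v := u - c • e
  have hc : ‖c‖ ≤ 1 := by simpa [hu, he] using norm_inner_le_norm (𝕜 := ℂ) e u
  have hv : ‖v‖ ^ 2 = 1 - ‖c‖ ^ 2 := by rw [norm_sub_inner_smul_sq he, hu, one_pow]
  have hcz : ‖c - z‖ = 1 - ‖c‖ := by
    have : c - z = ((‖c‖ - 1 : ℝ) : ℂ) * z := by
      rw [Complex.ofReal_sub, sub_mul, Complex.norm_mul_exp_arg_mul_I, Complex.ofReal_one, one_mul]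
    rw [this, norm_mul, Complex.norm_exp_ofReal_mul_I, mul_one, Complex.norm_real,
      Real.norm_eq_abs, abs_of_nonpos (by linarith)]
    ring
  calc ‖u - z • e‖ = ‖v + (c - z) • e‖ := by congr 1; simp only [v, sub_smul]; abel
    _ ≤ ‖v‖ + (1 - ‖c‖) := by
      refine (norm_add_le _ _).trans_eq ?_
      rw [norm_smul, he, mul_one, hcz]
    _ ≤ 2 * ‖v‖ := by nlinarith [norm_nonneg v, norm_nonneg c]

theorem statement19_general {H : Type*} [NormedAddCommGroup H] [InnerProductSpace ℂ H]
    {ι : Type*} (A : H →L[ℂ] H)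
    (hA : ∀ x y : H, (inner ℂ (A x) y : ℂ) = inner ℂ x (A y))
    (e : HilbertBasis ι ℂ H) (lam : ι → ℝ)
    (heig : ∀ i : ι, A (e i) = (lam i : ℂ) • e i)
    (δ : ℝ)
    (hsep : ∀ i j : ι, lam i ≠ lam j → δ ≤ |lam i - lam j|)
    (hsimple : ∀ i j : ι, i ≠ j → lam i ≠ lam j)
    (ω ε : ℝ) (hεδ : ε < δ)
    (u : H) (hu : ‖u‖ = 1) (hAu : ‖A u - (ω : ℂ) • u‖ ≤ ε) :
    ∃ i : ι, |ω - lam i| ≤ ε ∧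
      ∃ θ : ℝ, ‖u - Complex.exp (θ * Complex.I) • e i‖ ≤ 2 * ε / (δ - ε) := by
  set p : ι → ℝ := fun i => ‖⟪e i, u⟫_ℂ‖ ^ 2
  have hp1 : HasSum p 1 := by simpa [hu] using e.hasSum_norm_inner_sq u
  have hAup : HasSum (fun i => (lam i - ω) ^ 2 * p i) (‖A u - (ω : ℂ) • u‖ ^ 2) := by
    convert e.hasSum_norm_inner_sq (A u - (ω : ℂ) • u) using 2 with i
    -- restated so that the coercion `ℝ → ℂ` is `Complex.ofReal`, not the `RCLike` one
    have h : ‖⟪e i, A u - (ω : ℂ) • u⟫_ℂ‖ = |lam i - ω| * ‖⟪e i, u⟫_ℂ‖ :=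
      norm_inner_apply_sub_smul_of_apply_eq_smul (hA _) (heig i) ω u
    rw [h, mul_pow, sq_abs]
  have hε0 : 0 ≤ ε := (norm_nonneg _).trans hAu
  have hε2 : ‖A u - (ω : ℂ) • u‖ ^ 2 ≤ ε ^ 2 := pow_le_pow_left₀ (norm_nonneg _) hAu 2
  obtain ⟨i, hi⟩ := exists_le_of_hasSum_mul_le (fun j => by positivity) hp1 hAup hε2
  have hωi : |ω - lam i| ≤ ε := abs_sub_comm (lam i) ω ▸ abs_le_of_sq_le_sq hi hε0
  have hgap : ∀ j ≠ i, (δ - ε) ^ 2 ≤ (lam j - ω) ^ 2 := by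
    intro j hj
    have hδj := hsep j i (hsimple j i hj)
    have htri := abs_sub_le (lam j) ω (lam i)
    rw [← sq_abs (lam j - ω)]
    exact pow_le_pow_left₀ (by linarith) (by linarith) 2
  have htail := mul_one_sub_le_of_hasSum_mul (fun j => by positivity) hp1 hAup (sq_nonneg _) hgap
  have hv := norm_sub_inner_smul_sq (𝕜 := ℂ) (e.orthonormal.1 i) u
  refine ⟨i, hωi, (⟪e i, u⟫_ℂ).arg,
    (norm_sub_exp_arg_smul_le hu (e.orthonormal.1 i)).trans ?_⟩
  rw [mul_div_assoc]
  gcongr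
  rw [le_div_iff₀ (by linarith), mul_comm,
    ← pow_le_pow_iff_left₀ (by positivity) hε0 two_ne_zero, mul_pow, hv, hu]
  linarith

/-- Quasi-eigenvectors of a bounded self-adjoint operator diagonalized by a Hilbert basis
with simple, `δ`-separated eigenvalues: if `‖Au - ωu‖ ≤ ε < δ` for a unit vector `u`, then
`u` is `2ε/(δ-ε)`-close to a phase rotation of an eigenvector with eigenvalue `ε`-close
to `ω`. -/
theorem statement19 {H : Type*} [NormedAddCommGroup H] [InnerProductSpace ℂ H]
    [CompleteSpace H] {ι : Type*} (A : H →L[ℂ] H)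
    (hA : ∀ x y : H, (inner ℂ (A x) y : ℂ) = inner ℂ x (A y))
    (e : HilbertBasis ι ℂ H) (lam : ι → ℝ)
    (heig : ∀ i : ι, A (e i) = (lam i : ℂ) • e i)
    (δ : ℝ) (hδ : 0 < δ)
    (hsep : ∀ i j : ι, lam i ≠ lam j → δ ≤ |lam i - lam j|)
    (hsimple : ∀ i j : ι, i ≠ j → lam i ≠ lam j)
    (ω ε : ℝ) (hε : 0 < ε) (hεδ : ε < δ)
    (u : H) (hu : ‖u‖ = 1) (hAu : ‖A u - (ω : ℂ) • u‖ ≤ ε) :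
    ∃ i : ι, |ω - lam i| ≤ ε ∧
      ∃ θ : ℝ, ‖u - Complex.exp (θ * Complex.I) • e i‖ ≤ 2 * ε / (δ - ε) :=
  statement19_general A hA e lam heig δ hsep hsimple ω ε hεδ u hu hAu
end
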